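/- Let G be a locally compact Hausdorff topological group and let μ be a regular probability measure on G that is algebraically regular in P(G) with Moore–Penrose inverse μ†, i.e., μ ∗ μ† ∗ μ = μ and μ† ∗ μ ∗ μ† = μ†. Suppose the identity e lies in the support S(μ) of μ and every element of S(μ) is of finite order. Then S(μ) is a subgroup of G (closed under the group operation and inversion), and S(μ) = S(μ†). -/

import Mathlib

/-!
Write `S` and `T` for the supports of `μ` and of its Moore–Penrose inverse `μd`. The support of a
convolution contains the product of the supports, so `μ ∗ μd ∗ μ = μ` and `μd ∗ μ ∗ μd = μd` give
`S T S ⊆ S` and `T S T ⊆ T`. As `1 ∈ S`, the second inclusion makes `T` closed under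
multiplication and the first gives `T ⊆ S`; so any `t ∈ T` has finite order and
`1 = t ^ orderOf t ∈ T`. Then `S = 1 S 1 ⊆ T`, `S S = S 1 S ⊆ S`, and a multiplicatively closed
set of elements of finite order is closed under inversion.
-/

open MeasureTheory
open scoped ENNReal

/-- The support of a measure: the set of points all of whose open neighbourhoods
have positive measure (equivalently, the smallest closed set of full measure for
regular measures). -/
def msupport {G : Type*} [TopologicalSpace G] [MeasurableSpace G]
    (μ : Measure G) : Set G :=
  {x | ∀ U : Set G, IsOpen U → x ∈ U → 0 < μ U}

open Measure

theorem msupport_eq_support {X : Type*} [TopologicalSpace X] [MeasurableSpace X]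
    (μ : Measure X) : msupport μ = μ.support := by
  ext x
  simp only [msupport, support_eq_forall_isOpen, Set.mem_ofPred_eq]
  exact ⟨fun h U hxU hU => h U hU hxU, fun h U hU hxU => h U hxU hU⟩

section Convolution

variable {M : Type*} [Monoid M] [TopologicalSpace M] [ContinuousMul M] [MeasurableSpace M]

theorem mul_mem_support_mconv {μ ν : Measure M} [SFinite ν] (hμν : μ ∗ₘ ν ≠ 0) {x y : M}
    (hx : x ∈ μ.support) (hy : y ∈ ν.support) : x * y ∈ (μ ∗ₘ ν).support := by
  have hmul : AEMeasurable (fun p : M × M => p.1 * p.2) (μ.prod ν) := by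
    by_contra h
    exact hμν (map_of_not_aemeasurable h)
  rw [mem_support_iff_forall] at hx hy ⊢
  intro U hU
  obtain ⟨u, hu, v, hv, huv⟩ := mem_nhds_prod_iff.mp (continuous_mul.continuousAt hU)
  calc 0 < μ u * ν v := ENNReal.mul_pos (hx u hu).ne' (hy v hv).ne'
    _ = μ.prod ν (u ×ˢ v) := (prod_prod u v).symm
    _ ≤ μ.prod ν ((fun p : M × M => p.1 * p.2) ⁻¹' U) := measure_mono huv
    _ ≤ (μ ∗ₘ ν) U := le_map_apply hmul U

theorem mul_mul_mem_support_of_mconv_mconv_eq {μ ν : Measure M} [SFinite μ] [SFinite ν]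
    (hμ : μ ≠ 0) (h : (μ ∗ₘ ν) ∗ₘ μ = μ) ⦃x t y : M⦄ (hx : x ∈ μ.support)
    (ht : t ∈ ν.support) (hy : y ∈ μ.support) : x * t * y ∈ μ.support := by
  have hμν : μ ∗ₘ ν ≠ 0 := fun h0 => hμ (by rw [← h, h0, zero_mconv])
  rw [← h] at hμ ⊢
  exact mul_mem_support_mconv hμ (mul_mem_support_mconv hμν hx ht) hy

end Convolution

theorem pow_succ_mem_of_mul_mem {M : Type*} [Monoid M] {s : Set M} {x : M}
    (hs : ∀ a ∈ s, ∀ b ∈ s, a * b ∈ s) (hx : x ∈ s) (n : ℕ) :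
    x ^ (n + 1) ∈ s := by
  induction n with
  | zero => simpa using hx
  | succ n ih => rw [pow_succ]; exact hs _ ih _ hx

theorem IsOfFinOrder.one_mem_of_mul_mem {M : Type*} [Monoid M] {s : Set M} {x : M}
    (hfin : IsOfFinOrder x) (hx : x ∈ s)
    (hs : ∀ a ∈ s, ∀ b ∈ s, a * b ∈ s) : (1 : M) ∈ s := by
  rw [← pow_orderOf_eq_one x, ← Nat.sub_add_cancel hfin.orderOf_pos]
  exact pow_succ_mem_of_mul_mem hs hx _

theorem IsOfFinOrder.inv_mem_of_mul_mem {G : Type*} [Group G] {s : Set G} {x : G}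
    (hfin : IsOfFinOrder x) (hx : x ∈ s)
    (hs : ∀ a ∈ s, ∀ b ∈ s, a * b ∈ s) : x⁻¹ ∈ s := by
  let S : Submonoid G :=
    { carrier := s
      mul_mem' := fun ha hb => hs _ ha _ hb
      one_mem' := hfin.one_mem_of_mul_mem hx hs }
  have hinv : x⁻¹ ∈ Submonoid.powers x :=
    hfin.mem_powers_iff_mem_zpowers.mpr (inv_mem (Subgroup.mem_zpowers x))
  exact Submonoid.powers_le.mpr (show x ∈ S from hx) hinv

theorem support_subgroup_of_moorePenrose_general
    {G : Type*} [Group G] [TopologicalSpace G] [IsTopologicalGroup G]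
    [MeasurableSpace G]
    (μ μd : Measure G) [IsProbabilityMeasure μ] [IsProbabilityMeasure μd]
    [μd.Regular]
    (h₁ : (μ ∗ₘ μd) ∗ₘ μ = μ) (h₂ : (μd ∗ₘ μ) ∗ₘ μd = μd)
    (he : (1 : G) ∈ msupport μ)
    (hfin : ∀ x ∈ msupport μ, IsOfFinOrder x) :
    (∀ x ∈ msupport μ, ∀ y ∈ msupport μ, x * y ∈ msupport μ) ∧
    (∀ x ∈ msupport μ, x⁻¹ ∈ msupport μ) ∧
    msupport μ = msupport μd := by
  simp only [msupport_eq_support] at he hfin ⊢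
  have hSTS := mul_mul_mem_support_of_mconv_mconv_eq (IsProbabilityMeasure.ne_zero μ) h₁
  have hTST := mul_mul_mem_support_of_mconv_mconv_eq (IsProbabilityMeasure.ne_zero μd) h₂
  have hTS : μd.support ⊆ μ.support := fun t ht => by simpa using hSTS he ht he
  have hTmul : ∀ a ∈ μd.support, ∀ b ∈ μd.support, a * b ∈ μd.support := fun a ha b hb => by
    simpa using hTST ha he hb
  obtain ⟨t, ht⟩ := Filter.nonempty_of_mem (support_mem_ae_of_regular (μ := μd))
  have heT : (1 : G) ∈ μd.support := (hfin t (hTS ht)).one_mem_of_mul_mem ht hTmul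
  have hST : μ.support ⊆ μd.support := fun s hs => by simpa using hTST heT hs heT
  have hmul : ∀ x ∈ μ.support, ∀ y ∈ μ.support, x * y ∈ μ.support := fun x hx y hy => by
    simpa using hSTS hx heT hy
  exact ⟨hmul, fun x hx => (hfin x hx).inv_mem_of_mul_mem hx hmul, hST.antisymm hTS⟩

theorem support_subgroup_of_moorePenrose
    {G : Type*} [Group G] [TopologicalSpace G] [IsTopologicalGroup G]
    [LocallyCompactSpace G] [T2Space G] [MeasurableSpace G] [BorelSpace G]
    (μ μd : Measure G) [IsProbabilityMeasure μ] [IsProbabilityMeasure μd]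
    [μ.Regular] [μd.Regular]
    (h₁ : (μ ∗ₘ μd) ∗ₘ μ = μ) (h₂ : (μd ∗ₘ μ) ∗ₘ μd = μd)
    (he : (1 : G) ∈ msupport μ)
    (hfin : ∀ x ∈ msupport μ, IsOfFinOrder x) :
    (∀ x ∈ msupport μ, ∀ y ∈ msupport μ, x * y ∈ msupport μ) ∧
    (∀ x ∈ msupport μ, x⁻¹ ∈ msupport μ) ∧
    msupport μ = msupport μd :=
  support_subgroup_of_moorePenrose_general μ μd h₁ h₂ he hfin
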